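/- For bounded linear operators B, C on a complex Hilbert space, w(BC)^2 ≤ (1/2)‖B‖²‖C‖² + (1/2)w(B(CB)*C). -/

import Mathlib

open ContinuousLinearMap

variable {H : Type*} [NormedAddCommGroup H] [InnerProductSpace ℂ H] [CompleteSpace H]

noncomputable def numRadius (A : H →L[ℂ] H) : ℝ :=
  ⨆ x : {x : H // ‖x‖ = 1}, ‖(inner ℂ (A x) (x : H) : ℂ)‖

lemma numRadius_nonneg (A : H →L[ℂ] H) : 0 ≤ numRadius A :=
  Real.iSup_nonneg fun _ => norm_nonneg _

lemma norm_inner_le_numRadius (A : H →L[ℂ] H) (x : H) (hx : ‖x‖ = 1) :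
    ‖(inner ℂ (A x) x : ℂ)‖ ≤ numRadius A := by
  have hb : BddAbove (Set.range fun x : {x : H // ‖x‖ = 1} =>
      ‖(inner ℂ (A x) (x : H) : ℂ)‖) := by
    refine ⟨‖A‖, ?_⟩
    rintro r ⟨y, rfl⟩
    calc ‖(inner ℂ (A y) (y : H) : ℂ)‖ ≤ ‖A (y : H)‖ * ‖(y : H)‖ := norm_inner_le_norm _ _
      _ ≤ (‖A‖ * ‖(y : H)‖) * ‖(y : H)‖ := by gcongr; exact A.le_opNorm y
      _ = ‖A‖ := by rw [y.2]; ring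
  exact le_ciSup hb ⟨x, hx⟩

lemma buzano (e a b : H) (he : ‖e‖ = 1) :
    2 * ‖(inner ℂ a e : ℂ) * (inner ℂ e b : ℂ)‖ ≤ ‖a‖ * ‖b‖ + ‖(inner ℂ a b : ℂ)‖ := by
  set r : H := ((2 : ℂ) * (inner ℂ e b : ℂ)) • e - b with hr
  have hee : (inner ℂ e e : ℂ) = 1 := by
    rw [inner_self_eq_norm_sq_to_K, he]; norm_num
  have hrr : (inner ℂ r r : ℂ) = inner ℂ b b := by
    simp only [hr, inner_sub_left, inner_sub_right, inner_smul_left, inner_smul_right, hee,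
      map_mul, map_ofNat, inner_conj_symm]
    ring
  have hnorm : ‖r‖ = ‖b‖ := by
    have h3 : ‖r‖ ^ 2 = ‖b‖ ^ 2 := by
      rw [← inner_self_eq_norm_sq (𝕜 := ℂ) r, ← inner_self_eq_norm_sq (𝕜 := ℂ) b, hrr]
    nlinarith [norm_nonneg r, norm_nonneg b]
  have key : (2 : ℂ) * (inner ℂ a e : ℂ) * (inner ℂ e b : ℂ) = inner ℂ a r + inner ℂ a b := by
    simp only [hr, inner_sub_right, inner_smul_right]
    ring
  calc 2 * ‖(inner ℂ a e : ℂ) * (inner ℂ e b : ℂ)‖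
      = ‖(2 : ℂ) * (inner ℂ a e : ℂ) * (inner ℂ e b : ℂ)‖ := by
        rw [mul_assoc, norm_mul]; norm_num
    _ = ‖(inner ℂ a r : ℂ) + (inner ℂ a b : ℂ)‖ := by rw [key]
    _ ≤ ‖(inner ℂ a r : ℂ)‖ + ‖(inner ℂ a b : ℂ)‖ := norm_add_le _ _
    _ ≤ ‖a‖ * ‖r‖ + ‖(inner ℂ a b : ℂ)‖ := by gcongr; exact norm_inner_le_norm _ _
    _ = ‖a‖ * ‖b‖ + ‖(inner ℂ a b : ℂ)‖ := by rw [hnorm]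

theorem stmt5 (B C : H →L[ℂ] H) :
    numRadius (B * C) ^ 2 ≤
      (1 / 2) * ‖B‖ ^ 2 * ‖C‖ ^ 2 + (1 / 2) * numRadius (B * adjoint (C * B) * C) := by
  set D : H →L[ℂ] H := B * adjoint (C * B) * C with hD
  set P : H →L[ℂ] H := adjoint C * C with hP
  set Q : H →L[ℂ] H := B * adjoint B with hQ
  have hDQP : D = Q * P := by
    rw [hD, hQ, hP]
    have h : adjoint (C * B) = adjoint B * adjoint C := by
      simpa [mul_def] using adjoint_comp C B
    rw [h]
    simp only [mul_assoc]
  set R : ℝ := (1 / 2) * ‖B‖ ^ 2 * ‖C‖ ^ 2 + (1 / 2) * numRadius D with hR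
  have hRnn : 0 ≤ R := by
    have := numRadius_nonneg D
    positivity
  have hadjB : ‖adjoint B‖ = ‖B‖ := by
    simpa using LinearIsometryEquiv.norm_map (adjoint : (H →L[ℂ] H) ≃ₗᵢ⋆[ℂ] (H →L[ℂ] H)) B
  have hadjC : ‖adjoint C‖ = ‖C‖ := by
    simpa using LinearIsometryEquiv.norm_map (adjoint : (H →L[ℂ] H) ≃ₗᵢ⋆[ℂ] (H →L[ℂ] H)) C
  have main : ∀ x : H, ‖x‖ = 1 → ‖(inner ℂ ((B * C) x) x : ℂ)‖ ^ 2 ≤ R := by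
    intro x hx
    have h1 : (inner ℂ ((B * C) x) x : ℂ) = inner ℂ (C x) (adjoint B x) := by
      rw [show (B * C) x = B (C x) from rfl, ← adjoint_inner_right]
    have hCS : ‖(inner ℂ ((B * C) x) x : ℂ)‖ ^ 2 ≤ ‖C x‖ ^ 2 * ‖adjoint B x‖ ^ 2 := by
      rw [h1]
      have h := norm_inner_le_norm (𝕜 := ℂ) (C x) (adjoint B x)
      nlinarith [norm_nonneg ((inner ℂ (C x) (adjoint B x) : ℂ)), norm_nonneg (C x),
        norm_nonneg (adjoint B x)]
    have hPx : (inner ℂ (P x) x : ℂ) = (‖C x‖ : ℂ) ^ 2 := by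
      rw [show P x = adjoint C (C x) from rfl, adjoint_inner_left,
        inner_self_eq_norm_sq_to_K]
      norm_cast
    have hQx : (inner ℂ x (Q x) : ℂ) = (‖adjoint B x‖ : ℂ) ^ 2 := by
      rw [show Q x = B (adjoint B x) from rfl, ← adjoint_inner_left,
        inner_self_eq_norm_sq_to_K]
      norm_cast
    have hprod : ‖C x‖ ^ 2 * ‖adjoint B x‖ ^ 2 =
        ‖(inner ℂ (P x) x : ℂ) * (inner ℂ x (Q x) : ℂ)‖ := by
      rw [hPx, hQx, norm_mul]
      push_cast
      rw [norm_pow, norm_pow]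
      simp [Complex.norm_real]
    have hPQ : (inner ℂ (P x) (Q x) : ℂ) = inner ℂ (D x) x := by
      have : (inner ℂ (adjoint Q (P x)) x : ℂ) = inner ℂ (P x) (Q x) := adjoint_inner_left _ _ _
      rw [← this, hDQP]
      congr 1
      rw [show (Q * P) x = Q (P x) from rfl]
      congr 1
      rw [hQ]
      have h := adjoint_comp B (adjoint B)
      rw [adjoint_adjoint] at h
      simpa [mul_def] using h
    have hPxb : ‖P x‖ ≤ ‖C‖ ^ 2 := by
      calc ‖P x‖ = ‖adjoint C (C x)‖ := rfl
        _ ≤ ‖adjoint C‖ * ‖C x‖ := le_opNorm _ _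
        _ ≤ ‖adjoint C‖ * (‖C‖ * ‖x‖) := by gcongr; exact le_opNorm _ _
        _ = ‖C‖ ^ 2 := by rw [hadjC, hx]; ring
    have hQxb : ‖Q x‖ ≤ ‖B‖ ^ 2 := by
      calc ‖Q x‖ = ‖B (adjoint B x)‖ := rfl
        _ ≤ ‖B‖ * ‖adjoint B x‖ := le_opNorm _ _
        _ ≤ ‖B‖ * (‖adjoint B‖ * ‖x‖) := by gcongr; exact le_opNorm _ _
        _ = ‖B‖ ^ 2 := by rw [hadjB, hx]; ring
    have hbuz := buzano x (P x) (Q x) hx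
    have hnr : ‖(inner ℂ (P x) (Q x) : ℂ)‖ ≤ numRadius D := by
      rw [hPQ]; exact norm_inner_le_numRadius D x hx
    have hPQnorms : ‖P x‖ * ‖Q x‖ ≤ ‖B‖ ^ 2 * ‖C‖ ^ 2 := by
      calc ‖P x‖ * ‖Q x‖ ≤ ‖C‖ ^ 2 * ‖B‖ ^ 2 := by
            exact mul_le_mul hPxb hQxb (norm_nonneg _) (by positivity)
        _ = ‖B‖ ^ 2 * ‖C‖ ^ 2 := by ring
    calc ‖(inner ℂ ((B * C) x) x : ℂ)‖ ^ 2 ≤ ‖C x‖ ^ 2 * ‖adjoint B x‖ ^ 2 := hCS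
      _ = ‖(inner ℂ (P x) x : ℂ) * (inner ℂ x (Q x) : ℂ)‖ := hprod
      _ ≤ (‖P x‖ * ‖Q x‖ + ‖(inner ℂ (P x) (Q x) : ℂ)‖) / 2 := by linarith
      _ ≤ (‖B‖ ^ 2 * ‖C‖ ^ 2 + numRadius D) / 2 := by gcongr
      _ = R := by rw [hR]; ring
  have hsup : numRadius (B * C) ≤ Real.sqrt R := by
    apply Real.iSup_le _ (Real.sqrt_nonneg R)
    rintro ⟨x, hx⟩
    have := main x hx
    have hnn : (0:ℝ) ≤ ‖(inner ℂ ((B * C) x) x : ℂ)‖ := norm_nonneg _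
    nlinarith [Real.sq_sqrt hRnn, Real.sqrt_nonneg R]
  calc numRadius (B * C) ^ 2 ≤ Real.sqrt R ^ 2 := by
        exact pow_le_pow_left₀ (numRadius_nonneg _) hsup 2
    _ = R := Real.sq_sqrt hRnn
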